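/- With the notation of the previous setting, E[(X̂ ∘ E)^H R (X̂ ∘ E)] = (X̂ ∘ E[E])^H R (X̂ ∘ E[E]) + ΔS · I_τ, where ΔS = P_D Σ_{k=1}^K β_k (1 − (1−2p_k)²) and E[E] is the matrix with entries (1−2p_k) in row k. -/

import Mathlib

open MeasureTheory ProbabilityTheory Matrix

/-- With `X̂ ∈ {±√P_D}^{K×τ}` deterministic, `E` random with independent `±1` entries with
`E[E_{ki}] = 1 - 2 p_k`, and `R = diag(β₁,…,β_K)`:
`E[(X̂ ∘ E)ᴴ R (X̂ ∘ E)] = (X̂ ∘ E[E])ᴴ R (X̂ ∘ E[E]) + ΔS · I_τ`, where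
`ΔS = P_D Σ_k β_k (1 - (1-2p_k)²)` and `E[E]` has entries `1 - 2p_k` in row `k`. -/
theorem hadamard_error_second_moment_decomposition
    {Ω : Type*} [MeasurableSpace Ω] (μ : Measure Ω) [IsProbabilityMeasure μ]
    (K τ : ℕ) (PD : ℝ) (hPD : 0 < PD)
    (p : Fin K → ℝ) (hp : ∀ k, 0 ≤ p k ∧ p k ≤ 1)
    (βk : Fin K → ℝ) (hβk : ∀ k, 0 < βk k)
    (Xhat : Matrix (Fin K) (Fin τ) ℂ)
    (hXhat : ∀ k i, Xhat k i = (Real.sqrt PD : ℂ) ∨ Xhat k i = -(Real.sqrt PD : ℂ))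
    (Emat : Ω → Matrix (Fin K) (Fin τ) ℂ)
    (hEval : ∀ ω k i, Emat ω k i = 1 ∨ Emat ω k i = -1)
    (hEmean : ∀ k i, ∫ ω, Emat ω k i ∂μ = ((1 - 2 * p k : ℝ) : ℂ))
    (hEmeas : ∀ k i, Measurable (fun ω => Emat ω k i))
    (hindep : iIndepFun
      (fun (q : Fin K × Fin τ) ω => Emat ω q.1 q.2) μ)
    (Ebar : Matrix (Fin K) (Fin τ) ℂ)
    (hEbar : ∀ k i, Ebar k i = ((1 - 2 * p k : ℝ) : ℂ)) :
    ∀ i j : Fin τ,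
      ∫ ω, ((Xhat.hadamard (Emat ω))ᴴ *
          Matrix.diagonal (fun k => (βk k : ℂ)) * (Xhat.hadamard (Emat ω))) i j ∂μ =
        ((Xhat.hadamard Ebar)ᴴ * Matrix.diagonal (fun k => (βk k : ℂ)) *
            (Xhat.hadamard Ebar) +
          ((PD * ∑ k, βk k * (1 - (1 - 2 * p k) ^ 2) : ℝ) : ℂ) •
            (1 : Matrix (Fin τ) (Fin τ) ℂ)) i j := by
  intro i j
  -- conj of entries
  have hconjE : ∀ ω k i, star (Emat ω k i) = Emat ω k i := by
    intro ω k i; rcases hEval ω k i with h | h <;> simp [h]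
  have hconjX : ∀ k i, star (Xhat k i) = Xhat k i := by
    intro k i; rcases hXhat k i with h | h <;> simp [h, RCLike.star_def, Complex.conj_ofReal]
  have hs : ((Real.sqrt PD : ℝ) : ℂ) * ((Real.sqrt PD : ℝ) : ℂ) = (PD : ℂ) := by
    rw [← Complex.ofReal_mul, Real.mul_self_sqrt hPD.le]
  have hXsq : ∀ k (i : Fin τ), Xhat k i * Xhat k i = (PD : ℂ) := by
    intro k i
    rcases hXhat k i with h | h <;> rw [h]
    · exact hs
    · rw [neg_mul_neg]; exact hs
  -- the coefficient
  set c : Fin K → ℂ := fun k => Xhat k i * (βk k : ℂ) * Xhat k j with hc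
  -- entrywise formula for the quadratic form
  have hform : ∀ (M : Matrix (Fin K) (Fin τ) ℂ), (∀ k i, star (M k i) = M k i) →
      ((Xhat.hadamard M)ᴴ * Matrix.diagonal (fun k => (βk k : ℂ)) *
        (Xhat.hadamard M)) i j = ∑ k, c k * (M k i * M k j) := by
    intro M hM
    rw [Matrix.mul_apply]
    simp only [Matrix.mul_diagonal, Matrix.conjTranspose_apply, Matrix.hadamard_apply,
      star_mul', hM, hconjX, hc]
    exact Finset.sum_congr rfl fun k _ => by ring
  -- casting real integrals to complex ones
  have key : ∀ (h : Ω → ℝ), Integrable h μ →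
      ∫ ω, ((h ω : ℝ) : ℂ) ∂μ = ((∫ ω, h ω ∂μ : ℝ) : ℂ) := by
    intro h hh
    have hint : Integrable (fun ω => ((h ω : ℝ) : ℂ)) μ := hh.ofReal
    apply Complex.ext
    · have := integral_re (𝕜 := ℂ) hint
      simpa using this.symm
    · have := integral_im (𝕜 := ℂ) hint
      simpa using this.symm
  -- integrability of entries of E
  have hInt : ∀ k (i : Fin τ), Integrable (fun ω => Emat ω k i) μ := by
    intro k i
    refine ⟨(hEmeas k i).aestronglyMeasurable, ?_⟩
    refine HasFiniteIntegral.of_bounded (C := 1) (Filter.Eventually.of_forall fun ω => ?_)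
    rcases hEval ω k i with h | h <;> simp [h]
  have hIntMul : ∀ k (i j : Fin τ), Integrable (fun ω => Emat ω k i * Emat ω k j) μ := by
    intro k i j
    refine ⟨((hEmeas k i).mul (hEmeas k j)).aestronglyMeasurable, ?_⟩
    refine HasFiniteIntegral.of_bounded (C := 1) (Filter.Eventually.of_forall fun ω => ?_)
    rcases hEval ω k i with h | h <;> rcases hEval ω k j with h' | h' <;> simp [h, h']
  -- second moment of products of entries
  have hprod : ∀ k, ∫ ω, Emat ω k i * Emat ω k j ∂μ =
      if i = j then 1 else ((1 - 2 * p k : ℝ) : ℂ) ^ 2 := by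
    intro k
    by_cases hij : i = j
    · subst hij
      simp only [if_pos rfl]
      have : ∀ ω, Emat ω k i * Emat ω k i = 1 := by
        intro ω; rcases hEval ω k i with h | h <;> simp [h]
      simp [this]
    · simp only [if_neg hij]
      -- reduce to real-valued functions
      set f : Ω → ℝ := fun ω => (Emat ω k i).re with hf
      set g : Ω → ℝ := fun ω => (Emat ω k j).re with hg
      have hfc : ∀ ω, ((f ω : ℝ) : ℂ) = Emat ω k i := by
        intro ω; rcases hEval ω k i with h | h <;> simp [hf, h]
      have hgc : ∀ ω, ((g ω : ℝ) : ℂ) = Emat ω k j := by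
        intro ω; rcases hEval ω k j with h | h <;> simp [hg, h]
      have hfm : Measurable f := Complex.measurable_re.comp (hEmeas k i)
      have hgm : Measurable g := Complex.measurable_re.comp (hEmeas k j)
      have hfint : Integrable f μ := by
        refine ⟨hfm.aestronglyMeasurable, ?_⟩
        refine HasFiniteIntegral.of_bounded (C := 1) (Filter.Eventually.of_forall fun ω => ?_)
        rcases hEval ω k i with h | h <;> simp [hf, h]
      have hgint : Integrable g μ := by
        refine ⟨hgm.aestronglyMeasurable, ?_⟩
        refine HasFiniteIntegral.of_bounded (C := 1) (Filter.Eventually.of_forall fun ω => ?_)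
        rcases hEval ω k j with h | h <;> simp [hg, h]
      have hfgint : Integrable (fun ω => f ω * g ω) μ := by
        refine ⟨(hfm.mul hgm).aestronglyMeasurable, ?_⟩
        refine HasFiniteIntegral.of_bounded (C := 1) (Filter.Eventually.of_forall fun ω => ?_)
        rcases hEval ω k i with h | h <;> rcases hEval ω k j with h' | h' <;>
          simp [hf, hg, h, h']
      have hne : ((k, i) : Fin K × Fin τ) ≠ (k, j) := by
        simp [Prod.ext_iff, hij]
      have hindep2 : IndepFun (fun ω => Emat ω k i) (fun ω => Emat ω k j) μ :=
        hindep.indepFun hne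
      have hindepfg : IndepFun f g μ :=
        hindep2.comp Complex.measurable_re Complex.measurable_re
      have hfmean : ∫ ω, f ω ∂μ = 1 - 2 * p k := by
        have h1 := hEmean k i
        rw [show (fun ω => Emat ω k i) = fun ω => ((f ω : ℝ) : ℂ) from
          funext fun ω => (hfc ω).symm, key f hfint] at h1
        exact_mod_cast h1
      have hgmean : ∫ ω, g ω ∂μ = 1 - 2 * p k := by
        have h1 := hEmean k j
        rw [show (fun ω => Emat ω k j) = fun ω => ((g ω : ℝ) : ℂ) from
          funext fun ω => (hgc ω).symm, key g hgint] at h1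
        exact_mod_cast h1
      calc ∫ ω, Emat ω k i * Emat ω k j ∂μ
          = ∫ ω, ((f ω * g ω : ℝ) : ℂ) ∂μ := by
            refine integral_congr_ae (Filter.Eventually.of_forall fun ω => ?_)
            push_cast [hfc ω, hgc ω]; ring
        _ = ((∫ ω, f ω * g ω ∂μ : ℝ) : ℂ) := key _ hfgint
        _ = ((1 - 2 * p k : ℝ) : ℂ) ^ 2 := by
            have hmul : ∫ ω, f ω * g ω ∂μ = (1 - 2 * p k) * (1 - 2 * p k) := by
              have h3 := hindepfg.integral_mul_eq_mul_integral hfint.aestronglyMeasurable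
                hgint.aestronglyMeasurable
              simpa [Pi.mul_apply, hfmean, hgmean] using h3
            rw [hmul]; push_cast; ring
  -- compute the LHS
  have hLHS : ∫ ω, ((Xhat.hadamard (Emat ω))ᴴ * Matrix.diagonal (fun k => (βk k : ℂ)) *
      (Xhat.hadamard (Emat ω))) i j ∂μ =
      ∑ k, c k * (if i = j then 1 else ((1 - 2 * p k : ℝ) : ℂ) ^ 2) := by
    have hfm : ∀ ω, ((Xhat.hadamard (Emat ω))ᴴ * Matrix.diagonal (fun k => (βk k : ℂ)) *
        (Xhat.hadamard (Emat ω))) i j = ∑ k, c k * (Emat ω k i * Emat ω k j) :=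
      fun ω => hform (Emat ω) (fun k i => hconjE ω k i)
    simp only [hfm]
    rw [integral_finset_sum _ (fun k _ => (hIntMul k i j).const_mul (c k))]
    exact Finset.sum_congr rfl fun k _ => by rw [integral_const_mul, hprod k]
  rw [hLHS]
  -- compute the RHS
  have hEbarconj : ∀ k i, star (Ebar k i) = Ebar k i := by
    intro k i; rw [hEbar, RCLike.star_def, Complex.conj_ofReal]
  rw [Matrix.add_apply, hform Ebar hEbarconj, Matrix.smul_apply, Matrix.one_apply]
  simp only [hEbar]
  by_cases hij : i = j
  · subst hij
    simp only [if_pos rfl, smul_eq_mul, mul_one]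
    have hck : ∀ k, c k = (PD : ℂ) * (βk k : ℂ) := by
      intro k
      have h2 : c k = (Xhat k i * Xhat k i) * (βk k : ℂ) := by simp only [hc]; ring
      rw [h2, hXsq]
    simp only [hck]
    push_cast
    rw [Finset.mul_sum, mul_one, ← Finset.sum_add_distrib]
    exact Finset.sum_congr rfl fun k _ => by ring
  · simp only [if_neg hij, smul_eq_mul, mul_zero, add_zero]
    exact Finset.sum_congr rfl fun k _ => by push_cast; ring
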